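/- arXiv:2302.12409 — 2 statements merged into one kernel-verified Lean document; each statement's English description precedes it below -/
import Mathlib

section
/- Let 1 ≤ l < k ≤ n, let δ ∈ (0,1), and let A > 0. There exists a constant δ′ > 0, depending only on A, δ, n, k and l, with the following property: if λ = (λ_1,…,λ_n) ∈ Γ_k satisfies λ_1 ≥ λ_2 ≥ ⋯ ≥ λ_n, λ_l ≥ δ λ_1 and λ_{l+1} ≤ δ′ λ_1, then for every index i > l one has σ_{k−1}(λ|i) ≥ A σ_k(λ)/λ_1. -/
open Finset

/-- `esymmOn S m lam` is the m-th elementary symmetric polynomial of the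
components of `lam` with indices in `S` (zero for `m < 0`, and automatically
zero for `m > |S|`). For `S = {i}ᶜ` this is `σ_m(λ|i)`, etc. -/
noncomputable def esymmOn {n : ℕ} (S : Finset (Fin n)) (m : ℤ) (lam : Fin n → ℝ) : ℝ :=
  if m < 0 then 0 else ∑ s ∈ S.powersetCard m.toNat, ∏ i ∈ s, lam i

/-- `σ_m(λ)` for the full vector. -/
noncomputable def esymm {n : ℕ} (m : ℤ) (lam : Fin n → ℝ) : ℝ :=
  esymmOn Finset.univ m lam

/-- Garding's cone `Γ_k`. -/
def GammaCone {n : ℕ} (k : ℕ) (lam : Fin n → ℝ) : Prop :=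
  ∀ j : ℕ, 1 ≤ j → j ≤ k → 0 < esymm (j : ℤ) lam

/-!
Write `μ = λ|i` and `c = max(λ_{l+1}, 0)`, so that `λ_i ≤ c ≤ δ′λ_1` and fewer than `k` entries
of `λ` exceed `c`. Since `σ_k(λ) = σ_k(μ) + λ_i σ_{k-1}(μ)` with `σ_{k-1}(μ) > 0` (Gårding), it
suffices to show `σ_k(μ) ≤ C c σ_{k-1}(μ)` when `μ ∈ Γ_k`. For nonnegative vectors this follows by
induction, removing an entry `≤ c`. A nonpositive entry can be removed from a vector of `Γ_k`; this
raises `σ_k`, and by Newton's inequality `(j+2) σ_j σ_{j+2} ≤ (j+1) σ_{j+1}²` it raises `σ_{k-1}`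
at most `k`-fold. Newton's inequality reduces, by Rolle's theorem applied to `∏ (X + λ_i)`, to the
case of `j + 2` variables, where it is the Cauchy–Schwarz inequality.
-/

open Polynomial

variable {ι : Type*}

noncomputable def elemSym (S : Finset ι) (m : ℕ) (f : ι → ℝ) : ℝ :=
  ∑ t ∈ S.powersetCard m, ∏ i ∈ t, f i

section ElemSym

variable {S : Finset ι} {f : ι → ℝ}

@[simp]
lemma elemSym_zero (S : Finset ι) (f : ι → ℝ) : elemSym S 0 f = 1 := by
  simp [elemSym]

lemma elemSym_eq_zero_of_card_lt {m : ℕ} (h : #S < m) (f : ι → ℝ) : elemSym S m f = 0 := by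
  simp [elemSym, powersetCard_eq_empty.2 h]

lemma elemSym_one (S : Finset ι) (f : ι → ℝ) : elemSym S 1 f = ∑ i ∈ S, f i := by
  simp [elemSym, powersetCard_one]

lemma elemSym_card (S : Finset ι) (f : ι → ℝ) : elemSym S #S f = ∏ i ∈ S, f i := by
  simp [elemSym, powersetCard_self]

lemma elemSym_nonneg (hf : ∀ i ∈ S, 0 ≤ f i) (m : ℕ) : 0 ≤ elemSym S m f :=
  sum_nonneg fun _ ht => prod_nonneg fun i hi => hf i ((mem_powersetCard.1 ht).1 hi)

lemma elemSym_mono {T : Finset ι} (hST : S ⊆ T) (hf : ∀ i ∈ T, 0 ≤ f i) (m : ℕ) :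
    elemSym S m f ≤ elemSym T m f :=
  sum_le_sum_of_subset_of_nonneg (powersetCard_mono hST) fun _ ht _ =>
    prod_nonneg fun i hi => hf i ((mem_powersetCard.1 ht).1 hi)

lemma elemSym_eq_esymm (S : Finset ι) (m : ℕ) (f : ι → ℝ) :
    elemSym S m f = (S.val.map f).esymm m :=
  (esymm_map_val f S m).symm

variable [DecidableEq ι]

lemma elemSym_insert {a : ι} (ha : a ∉ S) (m : ℕ) :
    elemSym (insert a S) (m + 1) f = elemSym S (m + 1) f + f a * elemSym S m f := by
  rw [elemSym, powersetCard_succ_insert ha, sum_union, sum_image, elemSym, elemSym, mul_sum]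
  · congr 1
    refine sum_congr rfl fun t ht => prod_insert fun h => ha ((mem_powersetCard.1 ht).1 h)
  · intro s hs t ht hst
    rw [mem_coe, mem_powersetCard] at hs ht
    rw [← erase_insert fun h => ha (hs.1 h), hst, erase_insert fun h => ha (ht.1 h)]
  · refine disjoint_right.2 fun s hs hs' => ?_
    obtain ⟨t, -, rfl⟩ := mem_image.1 hs
    exact ha ((mem_powersetCard.1 hs').1 (mem_insert_self a t))

lemma elemSym_erase {a : ι} (ha : a ∈ S) (m : ℕ) :
    elemSym S (m + 1) f = elemSym (S.erase a) (m + 1) f + f a * elemSym (S.erase a) m f := by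
  conv_lhs => rw [← insert_erase ha]
  exact elemSym_insert (notMem_erase a S) m

lemma elemSym_eq_sum_prod_sdiff {m : ℕ} (hm : m ≤ #S) :
    elemSym S m f = ∑ t ∈ S.powersetCard (#S - m), ∏ i ∈ S \ t, f i := by
  refine sum_nbij' (S \ ·) (S \ ·) ?_ ?_ ?_ ?_ ?_ <;> intro t ht <;>
    simp only [mem_powersetCard] at ht ⊢
  · exact ⟨sdiff_subset, by rw [card_sdiff_of_subset ht.1, ht.2]⟩
  · exact ⟨sdiff_subset, by rw [card_sdiff_of_subset ht.1, ht.2]; omega⟩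
  · exact Finset.sdiff_sdiff_eq_self ht.1
  · exact Finset.sdiff_sdiff_eq_self ht.1
  · rw [Finset.sdiff_sdiff_eq_self ht.1]

lemma sq_elemSym_one (S : Finset ι) (f : ι → ℝ) :
    elemSym S 1 f ^ 2 = ∑ i ∈ S, f i ^ 2 + 2 * elemSym S 2 f := by
  induction S using Finset.induction_on with
  | empty => simp [elemSym_one, elemSym_eq_zero_of_card_lt (by simp : #(∅ : Finset ι) < 2)]
  | insert a S ha ih =>
    rw [elemSym_insert ha 1, elemSym_insert ha 0, sum_insert ha, elemSym_zero]
    linear_combination ih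

end ElemSym

section Newton

variable {S : Finset ι} {f : ι → ℝ}

lemma Polynomial.Splits.iterate_derivative {p : ℝ[X]} (hp : p.Splits) (d : ℕ) :
    (derivative^[d] p).Splits := by
  induction d with
  | zero => exact hp
  | succ d ih =>
    rw [splits_iff_card_roots] at ih
    rw [Function.iterate_succ_apply', splits_iff_card_roots]
    have h₁ := card_roots_le_derivative (derivative^[d] p)
    have h₂ := natDegree_derivative_le (derivative^[d] p)
    exact le_antisymm (card_roots' _) (by omega)

/-- `-w` are the roots of the `d`-th derivative of `∏ i ∈ S, (X + f i)`, which is real-rooted by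
Rolle's theorem. -/
lemma exists_esymm_eq_of_iterate_derivative (S : Finset ι) (f : ι → ℝ) {d : ℕ}
    (hd : d ≤ #S) :
    ∃ w : Multiset ℝ, Multiset.card w = #S - d ∧ ∀ r ≤ #S - d,
      ((#S).descFactorial d : ℝ) * w.esymm r
        = ((#S - r).descFactorial d : ℝ) * elemSym S r f := by
  set M := #S
  set p : ℝ[X] := ∏ i ∈ S, (X + C (f i))
  have hp : ∀ r ≤ M, p.coeff (M - r) = elemSym S r f := fun r hr => by
    rw [prod_X_add_C_coeff S f (by omega), show M - (M - r) = r by omega]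
    rfl
  set q := derivative^[d] p
  have hq : ∀ m, q.coeff m = ((m + d).descFactorial d : ℝ) * p.coeff (m + d) := fun m => by
    rw [coeff_iterate_derivative, nsmul_eq_mul]
  have hlc : q.coeff (M - d) = M.descFactorial d := by
    rw [hq, Nat.sub_add_cancel hd, ← Nat.sub_zero M, hp 0 (Nat.zero_le _), elemSym_zero, mul_one]
  have hqdeg : q.natDegree = M - d := by
    have hlc₀ : q.coeff (M - d) ≠ 0 := by
      rw [hlc]
      exact_mod_cast (Nat.descFactorial_pos.2 hd).ne'
    refine le_antisymm ?_ (le_natDegree_of_ne_zero hlc₀)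
    refine (natDegree_iterate_derivative p d).trans (Nat.sub_le_sub_right ?_ d)
    exact le_trans (natDegree_prod_le S _) (by simp [M])
  have hsplit : q.Splits := (Splits.prod fun i _ => Splits.X_add_C (f i)).iterate_derivative d
  refine ⟨q.roots.map Neg.neg, ?_, fun r hr => ?_⟩
  · rw [Multiset.card_map, ← hqdeg, splits_iff_card_roots.1 hsplit]
  have hfac : q = C q.leadingCoeff * ((q.roots.map Neg.neg).map (X + C ·)).prod := by
    conv_lhs => rw [hsplit.eq_prod_roots]
    simp [Multiset.map_map, sub_eq_add_neg]
  have hcard : Multiset.card (q.roots.map Neg.neg) = M - d := by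
    rw [Multiset.card_map, ← hqdeg, splits_iff_card_roots.1 hsplit]
  have := congrArg (coeff · (M - d - r)) hfac
  simp only [coeff_C_mul] at this
  rw [Multiset.prod_X_add_C_coeff _ (by omega), hcard, show M - d - (M - d - r) = r by omega,
    leadingCoeff, hqdeg, hlc, hq, show M - d - r + d = M - r by omega, hp r (by omega)] at this
  exact this.symm

lemma elemSym_newton_of_card_eq {j : ℕ} (hS : #S = j + 2) :
    2 * (j + 2) * (elemSym S j f * elemSym S (j + 2) f) ≤ (j + 1) * elemSym S (j + 1) f ^ 2 := by
  classical
  set y : ι → ℝ := fun i => ∏ x ∈ S.erase i, f x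
  have hsum : elemSym S (j + 1) f = elemSym S 1 y := by
    rw [elemSym_eq_sum_prod_sdiff (by omega), hS, show j + 2 - (j + 1) = 1 by omega,
      powersetCard_one, sum_map, elemSym_one]
    simp [y, sdiff_singleton_eq_erase]
  have hpair : elemSym S j f * elemSym S (j + 2) f = elemSym S 2 y := by
    rw [← hS, elemSym_card, elemSym_eq_sum_prod_sdiff (by omega), show #S - j = 2 by omega,
      sum_mul]
    refine sum_congr rfl fun t ht => ?_
    obtain ⟨hts, ht2⟩ := mem_powersetCard.1 ht
    obtain ⟨a, b, hab, rfl⟩ := card_eq_two.1 ht2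
    have ha : a ∈ S := hts (mem_insert_self a {b})
    have hb : b ∈ S.erase a := mem_erase.2 ⟨hab.symm, hts (by simp)⟩
    rw [prod_pair hab, sdiff_insert, sdiff_singleton_eq_erase, erase_right_comm,
      ← mul_prod_erase S f ha, ← mul_prod_erase _ f hb]
    have hb' : a ∈ S.erase b := mem_erase.2 ⟨hab, ha⟩
    simp only [y, ← mul_prod_erase _ f hb, ← mul_prod_erase _ f hb',
      erase_right_comm (s := S) (a := b)]
    ring
  have hcs : elemSym S 1 y ^ 2 ≤ (j + 2) * ∑ i ∈ S, y i ^ 2 := by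
    have := sq_sum_le_card_mul_sum_sq (s := S) (f := y)
    rw [hS] at this
    rw [elemSym_one]
    exact_mod_cast this
  rw [hsum, hpair]
  nlinarith [sq_elemSym_one S y]

lemma descFactorial_add_two_mul_descFactorial_self (d : ℕ) :
    2 * (d + 1) * ((d + 2).descFactorial d * d.descFactorial d : ℝ)
      = (d + 2) * ((d + 1).descFactorial d : ℝ) ^ 2 := by
  have h₀ := Nat.factorial_mul_descFactorial (show d ≤ d + 2 by omega)
  have h₁ := Nat.factorial_mul_descFactorial (show d ≤ d + 1 by omega)
  rw [show d + 2 - d = 2 by omega, Nat.factorial_succ (d + 1), Nat.factorial_succ d] at h₀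
  rw [show d + 1 - d = 1 by omega, Nat.factorial_succ d] at h₁
  rw [Nat.descFactorial_self]
  have h₀' : (2 * (d + 2).descFactorial d : ℝ) = (d + 2) * ((d + 1) * d.factorial) := by
    exact_mod_cast h₀
  have h₁' : ((d + 1).descFactorial d : ℝ) = (d + 1) * d.factorial := by
    simpa using congrArg (Nat.cast (R := ℝ)) h₁
  rw [h₁']
  linear_combination ((d : ℝ) + 1) * d.factorial * h₀'

theorem elemSym_newton (S : Finset ι) (f : ι → ℝ) (j : ℕ) :
    (j + 2) * (elemSym S j f * elemSym S (j + 2) f) ≤ (j + 1) * elemSym S (j + 1) f ^ 2 := by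
  rcases lt_or_ge #S (j + 2) with hlt | hle
  · rw [elemSym_eq_zero_of_card_lt hlt, mul_zero, mul_zero]
    positivity
  set d := #S - (j + 2)
  obtain ⟨w, hw, hrel⟩ := exists_esymm_eq_of_iterate_derivative S f (d := d) (by omega)
  have htop := elemSym_newton_of_card_eq (S := (univ : Finset w)) (f := fun x => (x : ℝ))
    (j := j) (by rw [card_univ, Multiset.card_coe, hw]; omega)
  simp only [elemSym_eq_esymm, Multiset.map_univ_coe] at htop
  have h₀ := hrel j (by omega)
  have h₁ := hrel (j + 1) (by omega)
  have h₂ := hrel (j + 2) (by omega)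
  rw [show #S - j = d + 2 by omega] at h₀
  rw [show #S - (j + 1) = d + 1 by omega] at h₁
  set L : ℝ := ((#S).descFactorial d : ℝ)
  set a₀ : ℝ := (((d + 2).descFactorial d : ℕ) : ℝ)
  set a₁ : ℝ := (((d + 1).descFactorial d : ℕ) : ℝ)
  set a₂ : ℝ := ((d.descFactorial d : ℕ) : ℝ)
  have ha : 0 < 2 * (d + 1) * (a₀ * a₂) := by
    have : 0 < (d + 2).descFactorial d := Nat.descFactorial_pos.2 (by omega)
    have : 0 < d.descFactorial d := Nat.descFactorial_pos.2 le_rfl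
    positivity
  refine le_of_mul_le_mul_left ?_ ha
  calc 2 * (d + 1) * (a₀ * a₂) * ((j + 2) * (elemSym S j f * elemSym S (j + 2) f))
      = (d + 1) * L ^ 2 * (2 * (j + 2) * (w.esymm j * w.esymm (j + 2))) := by
        linear_combination (-2 * ((d : ℝ) + 1) * (j + 2)) *
          (a₂ * elemSym S (j + 2) f * h₀ + L * w.esymm j * h₂)
    _ ≤ (d + 1) * L ^ 2 * ((j + 1) * w.esymm (j + 1) ^ 2) := by gcongr
    _ = (d + 1) * (j + 1) * (a₁ ^ 2 * elemSym S (j + 1) f ^ 2) := by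
        linear_combination ((d : ℝ) + 1) * (j + 1) *
          (L * w.esymm (j + 1) + a₁ * elemSym S (j + 1) f) * h₁
    _ ≤ (d + 2) * (j + 1) * (a₁ ^ 2 * elemSym S (j + 1) f ^ 2) := by gcongr; linarith
    _ = 2 * (d + 1) * (a₀ * a₂) * ((j + 1) * elemSym S (j + 1) f ^ 2) := by
        linear_combination (-((j : ℝ) + 1) * elemSym S (j + 1) f ^ 2) *
          descFactorial_add_two_mul_descFactorial_self d

end Newton

def InGardingCone (S : Finset ι) (k : ℕ) (f : ι → ℝ) : Prop :=
  ∀ j ≤ k, 0 < elemSym S j f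

lemma InGardingCone.exists_pos {S : Finset ι} {f : ι → ℝ} {k : ℕ} (h : InGardingCone S k f)
    (hk : 1 ≤ k) : ∃ i ∈ S, 0 < f i := by
  have hsum : ∑ _i ∈ S, (0 : ℝ) < ∑ i ∈ S, f i := by
    simpa [elemSym_one] using h 1 hk
  exact exists_lt_of_sum_lt hsum

section Garding

variable [DecidableEq ι] {S : Finset ι} {f : ι → ℝ} {a : ι} {j k : ℕ}

theorem InGardingCone.erase (h : InGardingCone S (k + 1) f) (ha : a ∈ S) :
    InGardingCone (S.erase a) k f := by
  intro j hj
  induction j with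
  | zero => simp
  | succ j ih =>
    set e := fun m => elemSym (S.erase a) m f
    have he₀ : 0 < e j := ih (by omega)
    by_contra! he₁
    have h₁ : 0 < e (j + 1) + f a * e j := elemSym_erase ha j ▸ h (j + 1) (by omega)
    have h₂ : 0 < e (j + 2) + f a * e (j + 1) := elemSym_erase ha (j + 1) ▸ h (j + 2) (by omega)
    -- the two positivity conditions force `σ_j σ_{j+2} > σ_{j+1}²`, against Newton
    have hsq : e (j + 1) ^ 2 < e j * e (j + 2) := by
      nlinarith [mul_nonneg (neg_nonneg.2 he₁) h₁.le, mul_pos he₀ h₂]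
    have hN : (j + 2) * (e j * e (j + 2)) ≤ (j + 1) * e (j + 1) ^ 2 := elemSym_newton _ _ _
    nlinarith [sq_nonneg (e (j + 1))]

theorem InGardingCone.erase_of_nonpos (h : InGardingCone S k f) (ha : a ∈ S) (hfa : f a ≤ 0) :
    InGardingCone (S.erase a) k f ∧ elemSym S k f ≤ elemSym (S.erase a) k f := by
  cases k with
  | zero => exact ⟨fun j hj => by simp [Nat.le_zero.1 hj], by simp⟩
  | succ k =>
    have hdel := h.erase ha
    have hle : elemSym S (k + 1) f ≤ elemSym (S.erase a) (k + 1) f := by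
      rw [elemSym_erase ha]
      nlinarith [hdel k le_rfl]
    refine ⟨fun j hj => ?_, hle⟩
    rcases hj.lt_or_eq with hj | rfl
    · exact hdel j (by omega)
    · exact (h _ le_rfl).trans_le hle

theorem InGardingCone.elemSym_erase_le_of_nonpos (h : InGardingCone S (j + 2) f) (ha : a ∈ S)
    (hfa : f a ≤ 0) : elemSym (S.erase a) (j + 1) f ≤ (j + 2) * elemSym S (j + 1) f := by
  set e := fun m => elemSym (S.erase a) m f
  have hV := (h.erase_of_nonpos ha hfa).1
  have he₀ : 0 < e j := hV j (by omega)
  have he₁ : 0 < e (j + 1) := hV (j + 1) (by omega)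
  have h₂ : 0 < e (j + 2) + f a * e (j + 1) := elemSym_erase ha (j + 1) ▸ h (j + 2) le_rfl
  have hN : (j + 2) * (e j * e (j + 2)) ≤ (j + 1) * e (j + 1) ^ 2 := elemSym_newton _ _ _
  have key : (-(j + 2) * f a * e j) * e (j + 1) ≤ ((j + 1) * e (j + 1)) * e (j + 1) := by
    nlinarith [mul_pos (mul_pos (by positivity : (0 : ℝ) < j + 2) he₀) h₂]
  rw [elemSym_erase ha]
  nlinarith [le_of_mul_le_mul_right key he₁]

lemma elemSym_succ_le_of_nonneg {c : ℝ} (hf : ∀ i ∈ S, 0 ≤ f i) (hc : 0 ≤ c)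
    (hS : #(S.filter (c < f ·)) ≤ j) : elemSym S (j + 1) f ≤ #S * c * elemSym S j f := by
  induction S using Finset.strongInduction with
  | H S ih =>
  rcases le_or_gt #S j with hcard | hcard
  · rw [elemSym_eq_zero_of_card_lt (by omega)]
    have := elemSym_nonneg hf j
    positivity
  obtain ⟨a, ha, hac⟩ : ∃ a ∈ S, f a ≤ c := by
    by_contra! hall
    rw [filter_true_of_mem hall] at hS
    omega
  have hf' : ∀ i ∈ S.erase a, 0 ≤ f i := fun i hi => hf i (mem_of_mem_erase hi)
  have hS' : #((S.erase a).filter (c < f ·)) ≤ j :=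
    (card_le_card (filter_subset_filter _ (erase_subset a S))).trans hS
  have hcard' : (#(S.erase a) : ℝ) + 1 = #S := by exact_mod_cast card_erase_add_one ha
  calc elemSym S (j + 1) f
      = elemSym (S.erase a) (j + 1) f + f a * elemSym (S.erase a) j f := elemSym_erase ha j
    _ ≤ #(S.erase a) * c * elemSym (S.erase a) j f + c * elemSym (S.erase a) j f := by
        gcongr
        · exact ih _ (erase_ssubset ha) hf' hS'
        · exact elemSym_nonneg hf' j
    _ = #S * c * elemSym (S.erase a) j f := by rw [← hcard']; ring
    _ ≤ #S * c * elemSym S j f := by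
        gcongr
        exact elemSym_mono (erase_subset a S) hf j

theorem InGardingCone.elemSym_succ_le {c : ℝ} (h : InGardingCone S (j + 2) f) (hc : 0 ≤ c)
    (hS : #(S.filter (c < f ·)) ≤ j + 1) :
    elemSym S (j + 2) f ≤ #S * (j + 2) ^ #S * c * elemSym S (j + 1) f := by
  induction S using Finset.strongInduction with
  | H S ih =>
  have he : 0 < elemSym S (j + 1) f := h (j + 1) (by omega)
  by_cases hneg : ∃ a ∈ S, f a ≤ 0
  · obtain ⟨a, ha, hfa⟩ := hneg
    obtain ⟨hV, hle⟩ := h.erase_of_nonpos ha hfa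
    have hS' : #((S.erase a).filter (c < f ·)) ≤ j + 1 :=
      (card_le_card (filter_subset_filter _ (erase_subset a S))).trans hS
    have hcard : #S = #(S.erase a) + 1 := (card_erase_add_one ha).symm
    calc elemSym S (j + 2) f
        ≤ elemSym (S.erase a) (j + 2) f := hle
      _ ≤ #(S.erase a) * (j + 2) ^ #(S.erase a) * c * elemSym (S.erase a) (j + 1) f :=
          ih _ (erase_ssubset ha) hV hS'
      _ ≤ #(S.erase a) * (j + 2) ^ #(S.erase a) * c * ((j + 2) * elemSym S (j + 1) f) := by
          gcongr
          exact h.elemSym_erase_le_of_nonpos ha hfa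
      _ = #(S.erase a) * (j + 2) ^ (#(S.erase a) + 1) * c * elemSym S (j + 1) f := by ring
      _ ≤ #S * (j + 2) ^ #S * c * elemSym S (j + 1) f := by
          rw [hcard]
          gcongr
          linarith
  · push Not at hneg
    calc elemSym S (j + 2) f
        ≤ #S * c * elemSym S (j + 1) f :=
          elemSym_succ_le_of_nonneg (fun i hi => (hneg i hi).le) hc hS
      _ = #S * 1 * c * elemSym S (j + 1) f := by ring
      _ ≤ #S * (j + 2) ^ #S * c * elemSym S (j + 1) f := by
          gcongr
          exact one_le_pow₀ (by linarith)

theorem InGardingCone.elemSym_le_mul_elemSym_erase {c : ℝ} (h : InGardingCone S (j + 2) f)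
    (ha : a ∈ S) (hfa : f a ≤ c) (hc : 0 ≤ c) (hS : #(S.filter (c < f ·)) ≤ j + 1) :
    elemSym S (j + 2) f ≤ (#S * (j + 2) ^ #S + 1) * c * elemSym (S.erase a) (j + 1) f := by
  have hV := h.erase ha
  have he : 0 < elemSym (S.erase a) (j + 1) f := hV (j + 1) le_rfl
  have hK : (#(S.erase a) : ℝ) * (j + 2) ^ #(S.erase a) ≤ #S * (j + 2) ^ #S := by
    have hle : #(S.erase a) ≤ #S := card_le_card (erase_subset a S)
    gcongr
    linarith
  have hrest :
      elemSym (S.erase a) (j + 2) f ≤ #S * (j + 2) ^ #S * c * elemSym (S.erase a) (j + 1) f := by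
    rcases le_or_gt (elemSym (S.erase a) (j + 2) f) 0 with hneg | hpos
    · exact hneg.trans (by positivity)
    have hV' : InGardingCone (S.erase a) (j + 2) f := fun i hi =>
      (Nat.le_succ_iff.1 hi).elim (hV i) (fun h => h ▸ hpos)
    have hS' : #((S.erase a).filter (c < f ·)) ≤ j + 1 :=
      (card_le_card (filter_subset_filter _ (erase_subset a S))).trans hS
    refine (hV'.elemSym_succ_le hc hS').trans ?_
    gcongr
  rw [elemSym_erase ha]
  nlinarith [mul_le_mul_of_nonneg_right hfa he.le]

end Garding

lemma card_filter_lt_le_of_antitone {n l : ℕ} (hl : l < n) {lam : Fin n → ℝ}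
    (hanti : Antitone lam) {c : ℝ} (hc : lam ⟨l, hl⟩ ≤ c) : #(univ.filter (c < lam ·)) ≤ l := by
  refine (card_le_card_of_injOn Fin.val (t := range l) (fun x hx => mem_range.2 ?_)
    Fin.val_injective.injOn).trans (card_range l).le
  by_contra! hxl
  exact (mem_filter.1 hx).2.not_ge ((hanti (show (⟨l, hl⟩ : Fin n) ≤ x from hxl)).trans hc)

lemma esymmOn_natCast {n : ℕ} (S : Finset (Fin n)) (m : ℕ) (lam : Fin n → ℝ) :
    esymmOn S m lam = elemSym S m lam := by
  simp [esymmOn, elemSym]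

lemma GammaCone.inGardingCone {n k : ℕ} {lam : Fin n → ℝ} (h : GammaCone k lam) :
    InGardingCone univ k lam := by
  intro j hj
  rcases j.eq_zero_or_pos with rfl | hj₀
  · simp
  · simpa [esymm, esymmOn_natCast] using h j hj₀ hj

theorem sigma_km1_deleted_large {n : ℕ} (l k : ℕ) (hl : 1 ≤ l) (hlk : l < k) (hkn : k ≤ n)
    (δ A : ℝ) (hA : A > 0) :
    ∃ δ' : ℝ, δ' > 0 ∧
      ∀ lam : Fin n → ℝ, GammaCone k lam → Antitone lam →
        lam ⟨l - 1, by omega⟩ ≥ δ * lam ⟨0, by omega⟩ →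
        lam ⟨l, by omega⟩ ≤ δ' * lam ⟨0, by omega⟩ →
        ∀ i : Fin n, l ≤ (i : ℕ) →
          esymmOn ({i}ᶜ : Finset (Fin n)) ((k : ℤ) - 1) lam
            ≥ A * esymm (k : ℤ) lam / lam ⟨0, by omega⟩ := by
  obtain ⟨j, rfl⟩ : ∃ j, k = j + 2 := ⟨k - 2, by omega⟩
  set K : ℝ := n * (j + 2) ^ n + 1
  refine ⟨1 / (A * K), by positivity, fun lam hΓ hanti _ hsmall i hi => ?_⟩
  have hΓ' := hΓ.inGardingCone
  have hlam₀ : 0 < lam ⟨0, by omega⟩ := by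
    obtain ⟨x, -, hx⟩ := hΓ'.exists_pos (by omega)
    exact hx.trans_le (hanti (show (⟨0, by omega⟩ : Fin n) ≤ x from Nat.zero_le _))
  set c := max (lam ⟨l, by omega⟩) 0
  have hci : lam i ≤ c := (hanti (show (⟨l, by omega⟩ : Fin n) ≤ i from hi)).trans (le_max_left _ _)
  have hcard : #(univ.filter (c < lam ·)) ≤ j + 1 :=
    (card_filter_lt_le_of_antitone (by omega) hanti (le_max_left _ _)).trans (by omega)
  have hK : 0 < K := by positivity
  have hc : c ≤ 1 / (A * K) * lam ⟨0, by omega⟩ := max_le hsmall (by positivity)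
  have hkey := hΓ'.elemSym_le_mul_elemSym_erase (mem_univ i) hci (le_max_right _ _) hcard
  rw [card_univ, Fintype.card_fin] at hkey
  have he : 0 < elemSym (univ.erase i) (j + 1) lam := hΓ'.erase (mem_univ i) (j + 1) le_rfl
  rw [show ((j + 2 : ℕ) : ℤ) - 1 = ((j + 1 : ℕ) : ℤ) by omega, esymm, esymmOn_natCast,
    esymmOn_natCast, compl_singleton, ge_iff_le, div_le_iff₀ hlam₀]
  calc A * elemSym univ (j + 2) lam
      ≤ A * (K * c * elemSym (univ.erase i) (j + 1) lam) := by gcongr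
    _ ≤ A * (K * (1 / (A * K) * lam ⟨0, by omega⟩) * elemSym (univ.erase i) (j + 1) lam) := by
        gcongr
    _ = elemSym (univ.erase i) (j + 1) lam * lam ⟨0, by omega⟩ := by
        field_simp
end

section
/- Let 1 ≤ m < k ≤ n. There exists a constant C > 0, depending only on n and m, such that for every λ = (λ_1,…,λ_n) ∈ Γ_k with λ_1 ≥ λ_2 ≥ ⋯ ≥ λ_n one has σ_m(λ) ≤ C λ_1 λ_2 ⋯ λ_m. -/
open Finset

/-!
Writing `λ'` for `λ` with the entry `λ_a` deleted, `σ_j(λ) = σ_j(λ') + λ_a σ_{j-1}(λ')`.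
Hence deleting a nonpositive entry keeps `σ_1, …, σ_k` positive and can only increase them, so
deleting all nonpositive entries gives `σ_m(λ) ≤ σ_m(λ⁺)`, with `λ⁺` the positive entries. Each of
the at most `C(n, m)` terms of `σ_m(λ⁺)` is a product of `m` positive entries, which by
monotonicity is at most `λ_1 ⋯ λ_m`.
-/

section

variable {n : ℕ}

@[simp]
lemma esymmOn_natCast_s16 (S : Finset (Fin n)) (j : ℕ) (lam : Fin n → ℝ) :
    esymmOn S j lam = ∑ s ∈ S.powersetCard j, ∏ i ∈ s, lam i := by
  simp [esymmOn]

lemma esymmOn_of_neg (S : Finset (Fin n)) {j : ℤ} (hj : j < 0) (lam : Fin n → ℝ) :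
    esymmOn S j lam = 0 :=
  if_pos hj

@[simp]
lemma esymmOn_zero (S : Finset (Fin n)) (lam : Fin n → ℝ) : esymmOn S 0 lam = 1 := by
  simpa using esymmOn_natCast_s16 S 0 lam

lemma esymmOn_insert {S : Finset (Fin n)} {a : Fin n} (ha : a ∉ S) (lam : Fin n → ℝ)
    (j : ℤ) :
    esymmOn (insert a S) j lam = esymmOn S j lam + lam a * esymmOn S (j - 1) lam := by
  rcases lt_or_ge j 0 with hj | hj
  · simp [esymmOn_of_neg _ hj, esymmOn_of_neg _ (show j - 1 < 0 by omega)]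
  lift j to ℕ using hj
  cases j with
  | zero => simp [esymmOn_of_neg S (show (-1 : ℤ) < 0 by norm_num)]
  | succ j =>
    have hfresh : ∀ t ∈ S.powersetCard j, a ∉ t := fun t ht hat =>
      ha ((mem_powersetCard.1 ht).1 hat)
    rw [show ((j + 1 : ℕ) : ℤ) - 1 = j by push_cast; ring]
    simp only [esymmOn_natCast_s16, powersetCard_succ_insert ha, mul_sum]
    rw [sum_union, sum_image]
    · exact congrArg _ (sum_congr rfl fun t ht => prod_insert (hfresh t ht))
    · intro t ht t' ht' htt'
      simpa [erase_insert (hfresh t ht), erase_insert (hfresh t' ht')] using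
        congrArg (erase · a) htt'
    · refine disjoint_left.2 fun t ht hat => ?_
      obtain ⟨t', -, rfl⟩ := mem_image.1 hat
      exact ha ((mem_powersetCard.1 ht).1 (mem_insert_self a t'))

lemma esymmOn_insert_le_of_nonpos {S : Finset (Fin n)} {a : Fin n} (ha : a ∉ S)
    {lam : Fin n → ℝ} (hla : lam a ≤ 0) {j : ℤ} (hj : 0 ≤ esymmOn S (j - 1) lam) :
    esymmOn (insert a S) j lam ≤ esymmOn S j lam := by
  rw [esymmOn_insert ha]
  linarith [mul_nonpos_of_nonpos_of_nonneg hla hj]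

def GammaConeOn (k : ℕ) (S : Finset (Fin n)) (lam : Fin n → ℝ) : Prop :=
  ∀ j : ℕ, 1 ≤ j → j ≤ k → 0 < esymmOn S j lam

lemma gammaCone_iff_gammaConeOn_univ {k : ℕ} {lam : Fin n → ℝ} :
    GammaCone k lam ↔ GammaConeOn k univ lam :=
  Iff.rfl

namespace GammaConeOn

variable {k : ℕ} {S U : Finset (Fin n)} {lam : Fin n → ℝ}

lemma esymmOn_pos (h : GammaConeOn k S lam) {j : ℕ} (hj : j ≤ k) : 0 < esymmOn S j lam := by
  rcases j with _ | j
  · simp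
  · exact h _ (by omega) hj

lemma esymmOn_nonneg (h : GammaConeOn k S lam) {j : ℤ} (hj : j ≤ k) :
    0 ≤ esymmOn S j lam := by
  rcases lt_or_ge j 0 with hj0 | hj0
  · exact (esymmOn_of_neg S hj0 lam).ge
  · lift j to ℕ using hj0
    exact (h.esymmOn_pos (by exact_mod_cast hj)).le

lemma of_insert_of_nonpos {a : Fin n} (h : GammaConeOn k (insert a S) lam) (ha : a ∉ S)
    (hla : lam a ≤ 0) : GammaConeOn k S lam := by
  suffices ∀ j : ℕ, j ≤ k → 0 < esymmOn S j lam from fun j _ hjk => this j hjk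
  intro j
  induction j with
  | zero => simp
  | succ j ih =>
    intro hjk
    refine (h.esymmOn_pos hjk).trans_le (esymmOn_insert_le_of_nonpos ha hla ?_)
    simpa using (ih (by omega)).le

lemma of_union_of_nonpos (h : GammaConeOn k (S ∪ U) lam) (hSU : Disjoint S U)
    (hU : ∀ a ∈ U, lam a ≤ 0) : GammaConeOn k S lam := by
  induction U using Finset.induction_on with
  | empty => simpa using h
  | insert a U haU ih =>
    rw [union_insert] at h
    have haSU : a ∉ S ∪ U := by
      simpa [haU] using (disjoint_insert_right.1 hSU).1
    exact ih (h.of_insert_of_nonpos haSU (hU a (mem_insert_self a U)))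
      (disjoint_insert_right.1 hSU).2 fun b hb => hU b (mem_insert_of_mem hb)

lemma esymmOn_union_le_of_nonpos (h : GammaConeOn k (S ∪ U) lam) (hSU : Disjoint S U)
    (hU : ∀ a ∈ U, lam a ≤ 0) {j : ℤ} (hj : j ≤ k) :
    esymmOn (S ∪ U) j lam ≤ esymmOn S j lam := by
  induction U using Finset.induction_on with
  | empty => simp
  | insert a U haU ih =>
    rw [union_insert] at h ⊢
    have haSU : a ∉ S ∪ U := by
      simpa [haU] using (disjoint_insert_right.1 hSU).1
    have hla := hU a (mem_insert_self a U)
    have h' := h.of_insert_of_nonpos haSU hla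
    exact (esymmOn_insert_le_of_nonpos haSU hla (h'.esymmOn_nonneg (by omega))).trans
      (ih h' (disjoint_insert_right.1 hSU).2 fun b hb => hU b (mem_insert_of_mem hb))

end GammaConeOn

lemma Fin.val_le_orderEmbedding {m : ℕ} (f : Fin m ↪o Fin n) (j : Fin m) :
    (j : ℕ) ≤ f j := by
  have hsub : (Iio j).map f.toEmbedding ⊆ Iio (f j) := by
    intro x hx
    obtain ⟨i, hi, rfl⟩ := mem_map.1 hx
    exact mem_Iio.2 (f.strictMono (mem_Iio.1 hi))
  simpa using card_le_card hsub

lemma prod_le_prod_filter_val_lt_card {lam : Fin n → ℝ} (hanti : Antitone lam)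
    {s : Finset (Fin n)} (hs : ∀ i ∈ s, 0 ≤ lam i) :
    ∏ i ∈ s, lam i ≤ ∏ i ∈ univ.filter (fun i : Fin n => (i : ℕ) < #s), lam i := by
  have hcard : #s ≤ n := by simpa using card_le_univ s
  have hfilter :
      univ.filter (fun i : Fin n => (i : ℕ) < #s) = univ.map (Fin.castLEEmb hcard) := by
    ext i
    simpa using ⟨fun hi => ⟨⟨i, hi⟩, rfl⟩, by rintro ⟨j, rfl⟩; exact j.isLt⟩
  set f := s.orderEmbOfFin rfl
  calc ∏ i ∈ s, lam i = ∏ j, lam (f j) := by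
        conv_lhs => rw [← map_orderEmbOfFin_univ s rfl]
        rw [prod_map]
        rfl
    _ ≤ ∏ j, lam (Fin.castLE hcard j) :=
        prod_le_prod (fun j _ => hs _ (orderEmbOfFin_mem s rfl j))
          fun j _ => hanti (Fin.val_le_orderEmbedding f j)
    _ = _ := by rw [hfilter, prod_map]; rfl

lemma esymmOn_le_card_powersetCard_mul_prod {lam : Fin n → ℝ} (hanti : Antitone lam)
    {P : Finset (Fin n)} (hP : ∀ i ∈ P, 0 ≤ lam i) (m : ℕ) :
    esymmOn P m lam ≤
      #(P.powersetCard m) * ∏ i ∈ univ.filter (fun i : Fin n => (i : ℕ) < m), lam i := by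
  rw [esymmOn_natCast_s16, ← nsmul_eq_mul]
  refine sum_le_card_nsmul _ _ _ fun s hs => ?_
  obtain ⟨hsP, rfl⟩ := mem_powersetCard.1 hs
  exact prod_le_prod_filter_val_lt_card hanti fun i hi => hP i (hsP hi)

theorem esymm_le_choose_mul_prod {k m : ℕ} {lam : Fin n → ℝ} (hΓ : GammaCone k lam)
    (hmk : m ≤ k) (hanti : Antitone lam) :
    esymm m lam ≤ n.choose m * ∏ i ∈ univ.filter (fun i : Fin n => (i : ℕ) < m), lam i := by
  set P := univ.filter fun i => 0 < lam i
  set N := univ.filter fun i => ¬0 < lam i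
  have hN : ∀ a ∈ N, lam a ≤ 0 := by simp [N]
  have hPN : Disjoint P N := disjoint_filter_filter_not _ _ _
  have hsplit : P ∪ N = univ := filter_union_filter_not_eq _ _
  have hΓPN : GammaConeOn k (P ∪ N) lam := by
    rwa [hsplit, ← gammaCone_iff_gammaConeOn_univ]
  have hdrop : esymm m lam ≤ esymmOn P m lam := by
    have := hΓPN.esymmOn_union_le_of_nonpos hPN hN (j := m) (by exact_mod_cast hmk)
    rwa [hsplit] at this
  have hbound := esymmOn_le_card_powersetCard_mul_prod hanti (P := P)
    (fun i hi => (mem_filter.1 hi).2.le) m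
  have hprod_pos := pos_of_mul_pos_right
    (((hΓPN.of_union_of_nonpos hPN hN).esymmOn_pos hmk).trans_le hbound) (Nat.cast_nonneg _)
  have hcard : (#(P.powersetCard m) : ℝ) ≤ n.choose m := by
    rw [card_powersetCard]
    exact_mod_cast Nat.choose_le_choose m (by simpa using card_le_univ P)
  calc esymm m lam ≤ esymmOn P m lam := hdrop
    _ ≤ _ := hbound
    _ ≤ _ := mul_le_mul_of_nonneg_right hcard hprod_pos.le

end

theorem sigma_m_le_prod_general {n : ℕ} (m : ℕ) (hmn : m < n) :
    ∃ C : ℝ, C > 0 ∧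
      ∀ k : ℕ, m < k → k ≤ n →
        ∀ lam : Fin n → ℝ, GammaCone k lam → Antitone lam →
          esymm (m : ℤ) lam
            ≤ C * ∏ i ∈ Finset.univ.filter (fun i : Fin n => (i : ℕ) < m), lam i :=
  ⟨n.choose m, by exact_mod_cast Nat.choose_pos hmn.le,
    fun _ hmk _ _ hΓ hanti => esymm_le_choose_mul_prod hΓ hmk.le hanti⟩

theorem sigma_m_le_prod {n : ℕ} (m : ℕ) (hm : 1 ≤ m) (hmn : m < n) :
    ∃ C : ℝ, C > 0 ∧
      ∀ k : ℕ, m < k → k ≤ n →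
        ∀ lam : Fin n → ℝ, GammaCone k lam → Antitone lam →
          esymm (m : ℤ) lam
            ≤ C * ∏ i ∈ Finset.univ.filter (fun i : Fin n => (i : ℕ) < m), lam i :=
  sigma_m_le_prod_general m hmn
end
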